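/- arXiv:math/0407515 — 4 statements merged into one kernel-verified Lean document; each statement's English description precedes it below -/
import Mathlib

section
/- In the group M = G(A ⊆ B) = (A ⊕ B) ⋊_ψ D, the commutator of (a,b,d) and (a',b',d') equals (0, d·ι(a') - d'·ι(a), 0). In particular, the commutator subgroup of M is {0} × ι(A) × {0}, isomorphic to A. -/
/-!
The commutator formula is a direct computation in the semidirect product. Its values
`d • ι(a') - d' • ι(a)` lie in `ι(A)` and already exhaust it (take `d = 1`, `a = 0`, `d' = 0`), so the
commutator subgroup is the range of the injective homomorphism `a ↦ (0, ι(a), 0)`.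
-/

namespace Metabelian

variable {B : Type*} [AddCommGroup B]

/-- The subgroup `A` of `B` is bounded by `n`, i.e. `n • a = 0` for all `a ∈ A`. -/
class BoundedSub (A : AddSubgroup B) (n : ℕ) : Prop where
  bound : ∀ a : A, n • (a : B) = 0

lemma val_smul_eq {n : ℕ} (a : B) (h : n • a = 0) (x : ℕ) : (x % n) • a = x • a := by
  conv_rhs => rw [← Nat.mod_add_div x n]
  rw [add_nsmul, mul_nsmul, h, smul_zero, add_zero]

/-- Birkhoff's construction `G(A ⊆ B) = (A ⊕ B) ⋊_ψ D` with `D = ℤ/n` where `n` bounds `A`: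
the underlying set is `A × B × ℤ/n` and the (multiplicatively written) group operation is
`(a,b,d)·(a',b',d') = (a+a', b + d·ι(a') + b', d+d')`. -/
instance mgroup (A : AddSubgroup B) (n : ℕ) [NeZero n] [BoundedSub A n] :
    Group (A × B × ZMod n) where
  mul x y := (x.1 + y.1, x.2.1 + x.2.2.val • (y.1 : B) + y.2.1, x.2.2 + y.2.2)
  one := (0, 0, 0)
  inv x := (-x.1, -x.2.1 + x.2.2.val • (x.1 : B), -x.2.2)
  mul_assoc x y z := by
    have hb := BoundedSub.bound (A := A) (n := n)
    refine Prod.ext (add_assoc _ _ _) (Prod.ext ?_ (add_assoc _ _ _))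
    show x.2.1 + x.2.2.val • (y.1 : B) + y.2.1 + (x.2.2 + y.2.2).val • (z.1 : B) + z.2.1
        = x.2.1 + x.2.2.val • ((y.1 + z.1 : A) : B) + (y.2.1 + y.2.2.val • (z.1 : B) + z.2.1)
    rw [ZMod.val_add, val_smul_eq _ (hb z.1), AddSubgroup.coe_add, smul_add, add_nsmul]
    abel
  one_mul x := by
    refine Prod.ext (zero_add _) (Prod.ext ?_ (zero_add _))
    show (0 : B) + (0 : ZMod n).val • (x.1 : B) + x.2.1 = x.2.1
    simp
  mul_one x := by
    refine Prod.ext (add_zero _) (Prod.ext ?_ (add_zero _))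
    show x.2.1 + x.2.2.val • ((0 : A) : B) + 0 = x.2.1
    simp
  inv_mul_cancel x := by
    have hb := BoundedSub.bound (A := A) (n := n)
    refine Prod.ext (neg_add_cancel _) (Prod.ext ?_ (neg_add_cancel _))
    show -x.2.1 + x.2.2.val • (x.1 : B) + (-x.2.2).val • (x.1 : B) + x.2.1 = 0
    have h2 : ((-x.2.2).val + x.2.2.val) % n = 0 := by
      rw [← ZMod.val_add, neg_add_cancel, ZMod.val_zero]
    have h3 : x.2.2.val • (x.1 : B) + (-x.2.2).val • (x.1 : B) = 0 := by
      rw [add_comm, ← add_nsmul, ← val_smul_eq _ (hb x.1), h2, zero_nsmul]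
    rw [add_assoc, add_assoc, ← add_assoc (x.2.2.val • (x.1 : B)), h3, zero_add, neg_add_cancel]

open scoped commutatorElement

section Construction

variable (A : AddSubgroup B) (n : ℕ) [NeZero n] [BoundedSub A n]

lemma mul_def (x y : A × B × ZMod n) :
    x * y = (x.1 + y.1, x.2.1 + x.2.2.val • (y.1 : B) + y.2.1, x.2.2 + y.2.2) := rfl

lemma inv_def (x : A × B × ZMod n) :
    x⁻¹ = (-x.1, -x.2.1 + x.2.2.val • (x.1 : B), -x.2.2) := rfl

lemma val_add_nsmul (d e : ZMod n) (a : A) :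
    (d + e).val • (a : B) = d.val • (a : B) + e.val • (a : B) := by
  rw [ZMod.val_add, val_smul_eq _ (BoundedSub.bound a), add_nsmul]

lemma val_neg_nsmul (d : ZMod n) (a : A) : (-d).val • (a : B) = -(d.val • (a : B)) := by
  refine eq_neg_of_add_eq_zero_left ?_
  rw [← val_add_nsmul, neg_add_cancel, ZMod.val_zero, zero_nsmul]

omit [NeZero n] in
lemma val_one_nsmul (a : A) : (1 : ZMod n).val • (a : B) = a := by
  rw [← Nat.cast_one, ZMod.val_natCast, val_smul_eq _ (BoundedSub.bound a), one_nsmul]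

lemma commutatorElement_eq (x y : A × B × ZMod n) :
    ⁅x, y⁆ = (0, x.2.2.val • (y.1 : B) - y.2.2.val • (x.1 : B), 0) := by
  simp only [commutatorElement_def, mul_def, inv_def, AddSubgroup.coe_neg, smul_neg,
    val_add_nsmul, val_neg_nsmul]
  refine Prod.ext ?_ (Prod.ext ?_ ?_) <;> dsimp only <;> abel

def inclB : Multiplicative A →* A × B × ZMod n where
  toFun a := (0, (a.toAdd : B), 0)
  map_one' := rfl
  map_mul' _ _ := by
    simp only [mul_def, toAdd_mul, AddSubgroup.coe_add, ZMod.val_zero, zero_nsmul, add_zero]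

lemma inclB_injective : Function.Injective (inclB A n) := fun _ _ h =>
  Multiplicative.toAdd.injective (Subtype.ext (congrArg (·.2.1) h))

lemma mem_range_inclB {g : A × B × ZMod n} :
    g ∈ (inclB A n).range ↔ g.1 = 0 ∧ g.2.1 ∈ A ∧ g.2.2 = 0 := by
  constructor
  · rintro ⟨a, rfl⟩
    exact ⟨rfl, a.toAdd.2, rfl⟩
  · rintro ⟨h1, hA, h3⟩
    exact ⟨Multiplicative.ofAdd ⟨g.2.1, hA⟩, Prod.ext h1.symm (Prod.ext rfl h3.symm)⟩

lemma commutator_eq_range_inclB : commutator (A × B × ZMod n) = (inclB A n).range := by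
  refine le_antisymm ?_ ?_
  · rw [commutator_def, Subgroup.commutator_le]
    intro x _ y _
    rw [commutatorElement_eq]
    exact ⟨Multiplicative.ofAdd (x.2.2.val • y.1 - y.2.2.val • x.1), rfl⟩
  · rintro _ ⟨a, rfl⟩
    have h : inclB A n a = ⁅((0, 0, 1) : A × B × ZMod n), ((a.toAdd, 0, 0) : A × B × ZMod n)⁆ := by
      rw [commutatorElement_eq]
      simp [inclB, val_one_nsmul]
    rw [h, commutator_def]
    exact Subgroup.commutator_mem_commutator (Subgroup.mem_top _) (Subgroup.mem_top _)

end Construction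

theorem commutator_of_construction_general (p m : ℕ) [Fact p.Prime] {B : Type*} [AddCommGroup B]
    (A : AddSubgroup B)
    [BoundedSub A (p ^ m)] :
    (∀ x y : A × B × ZMod (p ^ m),
        ⁅x, y⁆ = (0, x.2.2.val • (y.1 : B) - y.2.2.val • (x.1 : B), 0)) ∧
    (∀ g : A × B × ZMod (p ^ m),
        g ∈ commutator (A × B × ZMod (p ^ m)) ↔ g.1 = 0 ∧ g.2.1 ∈ A ∧ g.2.2 = 0) ∧
    Nonempty (↥(commutator (A × B × ZMod (p ^ m))) ≃* Multiplicative A) := by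
  have hrange := commutator_eq_range_inclB A (p ^ m)
  refine ⟨commutatorElement_eq A _, fun g => hrange ▸ mem_range_inclB A _, ?_⟩
  exact ⟨(MulEquiv.subgroupCongr hrange).trans (MonoidHom.ofInjective (inclB_injective A _)).symm⟩

/-- In `M = G(A ⊆ B) = (A ⊕ B) ⋊_ψ D`, the commutator of `(a,b,d)` and `(a',b',d')` equals
`(0, d•ι(a') - d'•ι(a), 0)`.  In particular the commutator subgroup of `M` is
`{0} × ι(A) × {0}`, isomorphic to `A`. -/
theorem commutator_of_construction (p m : ℕ) [Fact p.Prime] {B : Type*} [AddCommGroup B]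
    [Finite B] (hpB : ∀ b : B, ∃ k : ℕ, p ^ k • b = 0) (A : AddSubgroup B)
    [BoundedSub A (p ^ m)] (hexp : AddMonoid.exponent A = p ^ m) :
    (∀ x y : A × B × ZMod (p ^ m),
        ⁅x, y⁆ = (0, x.2.2.val • (y.1 : B) - y.2.2.val • (x.1 : B), 0)) ∧
    (∀ g : A × B × ZMod (p ^ m),
        g ∈ commutator (A × B × ZMod (p ^ m)) ↔ g.1 = 0 ∧ g.2.1 ∈ A ∧ g.2.2 = 0) ∧
    Nonempty (↥(commutator (A × B × ZMod (p ^ m))) ≃* Multiplicative A) :=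
  commutator_of_construction_general p m A
end Metabelian
end

section
/- The center of the group M = G(A ⊆ B) is {0} × B × {0}, isomorphic to B, provided A ≠ 0. -/
namespace Metabelian

variable {B : Type*} [AddCommGroup B]

/-- The center of `M = G(A ⊆ B)` is `{0} × B × {0}`, isomorphic to `B`, provided `A ≠ 0`:
an element `(a,b,d)` is central iff `a = 0` and `d = 0`. -/
theorem center_of_construction (p m : ℕ) [Fact p.Prime] {B : Type*} [AddCommGroup B]
    [Finite B] (hpB : ∀ b : B, ∃ k : ℕ, p ^ k • b = 0) (A : AddSubgroup B) (hA : A ≠ ⊥)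
    [BoundedSub A (p ^ m)] (hexp : AddMonoid.exponent A = p ^ m) (hm : 1 < p ^ m) :
    (∀ g : A × B × ZMod (p ^ m),
        g ∈ Subgroup.center (A × B × ZMod (p ^ m)) ↔ g.1 = 0 ∧ g.2.2 = 0) ∧
    Nonempty (↥(Subgroup.center (A × B × ZMod (p ^ m))) ≃* Multiplicative B) := by
  haveI : NeZero (p ^ m) := ⟨by omega⟩
  have mul_def : ∀ x y : A × B × ZMod (p ^ m),
      x * y = (x.1 + y.1, x.2.1 + x.2.2.val • (y.1 : B) + y.2.1, x.2.2 + y.2.2) :=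
    fun _ _ => rfl
  have hchar : ∀ g : A × B × ZMod (p ^ m),
      g ∈ Subgroup.center (A × B × ZMod (p ^ m)) ↔ g.1 = 0 ∧ g.2.2 = 0 := by
    intro g
    rw [Subgroup.mem_center_iff]
    constructor
    · intro h
      constructor
      · have h1 := congrArg (fun z : A × B × ZMod (p ^ m) => z.2.1) (h (0, 0, 1))
        simp only [mul_def, AddSubgroup.coe_zero, smul_zero, add_zero, zero_add] at h1
        have hv : (1 : ZMod (p ^ m)).val = 1 := by
          rw [ZMod.val_one_eq_one_mod, Nat.mod_eq_of_lt hm]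
        rw [hv, one_smul] at h1
        exact Subtype.ext (add_eq_right.mp h1)
      · have key : ∀ a : A, g.2.2.val • a = 0 := by
          intro a
          have h1 := congrArg (fun z : A × B × ZMod (p ^ m) => z.2.1) (h (a, 0, 0))
          simp only [mul_def, ZMod.val_zero, zero_smul, add_zero, zero_add] at h1
          have h2 : g.2.2.val • (a : B) = 0 := add_eq_left.mp h1.symm
          exact Subtype.ext (by simpa using h2)
        have hdvd := AddMonoid.exponent_dvd_of_forall_nsmul_eq_zero key
        rw [hexp] at hdvd
        exact (ZMod.val_eq_zero _).mp (Nat.eq_zero_of_dvd_of_lt hdvd (ZMod.val_lt _))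
    · rintro ⟨h1, h2⟩ z
      rw [mul_def, mul_def, h1, h2]
      simp [add_comm]
  refine ⟨hchar, ⟨?_⟩⟩
  exact
    { toFun := fun g => Multiplicative.ofAdd g.1.2.1
      invFun := fun b => ⟨(0, b.toAdd, 0), (hchar _).mpr ⟨rfl, rfl⟩⟩
      left_inv := by
        rintro ⟨g, hg⟩
        obtain ⟨h1, h2⟩ := (hchar g).mp hg
        ext <;> simp [h1.symm, h2.symm]
      right_inv := fun b => rfl
      map_mul' := by
        rintro ⟨x, hx⟩ ⟨y, hy⟩
        obtain ⟨hy1, -⟩ := (hchar y).mp hy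
        have : (x * y).2.1 = x.2.1 + y.2.1 := by
          rw [mul_def, hy1]; simp
        simp [this] }
end Metabelian
end

section
/- Let B = ℤ/p^6 ⊕ ℤ/p^4 ⊕ ℤ/p^2 with generators x, y, z, and for λ ∈ {0,…,p−1} let A_λ ≤ B be generated by u = p²x + py + z and v_λ = p²y + pλz. Then for λ ≠ λ' there is no automorphism f of B with f(A_λ) = A_{λ'}. -/
namespace Metabelian

variable {B : Type*} [AddCommGroup B]

/-! Birkhoff's example: `B = ℤ/p⁶ ⊕ ℤ/p⁴ ⊕ ℤ/p²` with generators `x, y, z`, and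
`A_λ = ⟨p²x + py + z, p²y + pλz⟩`. -/

/-- `B = ℤ/p⁶ ⊕ ℤ/p⁴ ⊕ ℤ/p²`. -/
abbrev Bb (p : ℕ) := ZMod (p ^ 6) × ZMod (p ^ 4) × ZMod (p ^ 2)

def xgen (p : ℕ) : Bb p := (1, 0, 0)
def ygen (p : ℕ) : Bb p := (0, 1, 0)
def zgen (p : ℕ) : Bb p := (0, 0, 1)

/-- `u = p²x + py + z`. -/
def ugen (p : ℕ) : Bb p := p ^ 2 • xgen p + p • ygen p + zgen p

/-- `v_λ = p²y + pλz`. -/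
def vgen (p l : ℕ) : Bb p := p ^ 2 • ygen p + (p * l) • zgen p

/-- `A_λ = ⟨u, v_λ⟩`. -/
def Asub (p l : ℕ) : AddSubgroup (Bb p) := AddSubgroup.closure {ugen p, vgen p l}

lemma ppow_zero (p n k : ℕ) (h : n ≤ k) : ((p : ZMod (p ^ n))) ^ k = 0 := by
  have h0 : ((p : ZMod (p ^ n))) ^ n = 0 := by rw [← Nat.cast_pow, ZMod.natCast_self]
  calc ((p : ZMod (p ^ n))) ^ k = (p : ZMod (p ^ n)) ^ n * (p : ZMod (p ^ n)) ^ (k - n) := by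
        rw [← pow_add, Nat.add_sub_cancel' h]
    _ = 0 := by rw [h0, zero_mul]

instance Asub_bounded (p l : ℕ) [Fact p.Prime] : BoundedSub (Asub p l) (p ^ 4) := by
  constructor
  rintro ⟨a, ha⟩
  simp only
  induction ha using AddSubgroup.closure_induction with
  | mem b hb =>
    rcases hb with rfl | rfl
    · show p ^ 4 • ugen p = 0
      simp only [ugen, xgen, ygen, zgen, smul_add, smul_smul, Prod.smul_mk, Prod.mk_add_mk,
        smul_zero, nsmul_eq_mul, Nat.cast_pow, mul_one, add_zero, zero_add, mul_zero]
      refine Prod.ext ?_ (Prod.ext ?_ ?_)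
      · show (p : ZMod (p ^ 6)) ^ 4 * (p : ZMod (p ^ 6)) ^ 2 = 0
        rw [← pow_add]; exact ppow_zero p 6 6 le_rfl
      · show (p : ZMod (p ^ 4)) ^ 4 * (p : ZMod (p ^ 4)) = 0
        rw [← pow_succ]; exact ppow_zero p 4 5 (by norm_num)
      · show (p : ZMod (p ^ 2)) ^ 4 = 0
        exact ppow_zero p 2 4 (by norm_num)
    · show p ^ 4 • vgen p l = 0
      simp only [vgen, ygen, zgen, smul_add, smul_smul, Prod.smul_mk, Prod.mk_add_mk,
        smul_zero, nsmul_eq_mul, Nat.cast_pow, Nat.cast_mul, mul_one, add_zero, zero_add,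
        mul_zero]
      refine Prod.ext ?_ (Prod.ext ?_ ?_)
      · show (0 : ZMod (p ^ 6)) = 0
        rfl
      · show (p : ZMod (p ^ 4)) ^ 4 * (p : ZMod (p ^ 4)) ^ 2 = 0
        rw [← pow_add]; exact ppow_zero p 4 6 (by norm_num)
      · show (p : ZMod (p ^ 2)) ^ 4 * ((p : ZMod (p ^ 2)) * l) = 0
        rw [ppow_zero p 2 4 (by norm_num), zero_mul]
  | zero => simp
  | add x y hx hy hx' hy' => simp [smul_add, hx', hy']
  | neg x hx hx' => simp [hx']


/-!
Let `f` be an automorphism of `B` with `f(A_λ) ⊆ A_λ'`, and write `X, Y, Z` for the images of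
`x, y, z`. Since `p⁴ Y = p² Z = 0`, the first coordinates of `Y` and `Z` vanish mod `p`, so
surjectivity of `f` forces `X₁ ≢ 0 mod p`. Writing `f u = α u + β v_λ'` and comparing coordinates
gives `X₁ ≡ Y₂ ≡ Z₃ ≡ α mod p`; writing `f v_λ = γ u + δ v_λ'`, the first coordinate gives
`p² ∣ γ`, and then the other two give `Y₂ ≡ δ` and `λ Z₃ ≡ λ' δ mod p`. Hence `α (λ - λ') ≡ 0`,
so `α ≡ 0` and `X₁ ≡ 0 mod p`, a contradiction.
-/

abbrev modP (p n : ℕ) [NeZero n] : ZMod (p ^ n) →+* ZMod p :=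
  ZMod.castHom (dvd_pow_self p (NeZero.ne n)) (ZMod p)

section ModP

variable {p : ℕ} [NeZero p]

theorem modP_eq_zero_of_pow_mul_eq_zero {n k : ℕ} [NeZero n] (hkn : k < n) {t : ZMod (p ^ n)}
    (h : (p : ZMod (p ^ n)) ^ k * t = 0) : modP p n t = 0 := by
  have : NeZero (p ^ n) := ⟨pow_ne_zero _ (NeZero.ne p)⟩
  rw [← ZMod.natCast_zmod_val t, ← Nat.cast_pow, ← Nat.cast_mul, ZMod.natCast_eq_zero_iff] at h
  rw [ZMod.castHom_apply, ← ZMod.natCast_val, ZMod.natCast_eq_zero_iff]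
  have h' : p ^ k * p ∣ p ^ k * t.val := (pow_succ p k ▸ pow_dvd_pow p hkn).trans h
  exact Nat.dvd_of_mul_dvd_mul_left (pow_pos (Nat.pos_of_neZero p) k) h'

theorem modP_eq_of_pow_mul_sub_eq_zero {n k : ℕ} [NeZero n] (hkn : k < n) {s t : ZMod (p ^ n)}
    (h : (p : ZMod (p ^ n)) ^ k * (s - t) = 0) : modP p n s = modP p n t :=
  sub_eq_zero.mp (map_sub (modP p n) s t ▸ modP_eq_zero_of_pow_mul_eq_zero hkn h)

theorem pow_dvd_of_intCast_mul_pow_eq_zero {n k : ℕ} (hkn : k ≤ n) {γ : ℤ}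
    (h : ((γ * p ^ k : ℤ) : ZMod (p ^ n)) = 0) : (p : ℤ) ^ (n - k) ∣ γ := by
  rw [ZMod.intCast_zmod_eq_zero_iff_dvd, Nat.cast_pow, ← Nat.sub_add_cancel hkn, pow_add] at h
  exact (mul_dvd_mul_iff_right (pow_ne_zero k (Int.natCast_ne_zero.mpr (NeZero.ne p)))).mp h

end ModP

section Birkhoff

variable {p : ℕ}

theorem ugen_eq : ugen p = ((p : ZMod (p ^ 6)) ^ 2, (p : ZMod (p ^ 4)), 1) := by
  simp [ugen, xgen, ygen, zgen]

theorem vgen_eq (l : ℕ) : vgen p l = (0, (p : ZMod (p ^ 4)) ^ 2, (p : ZMod (p ^ 2)) * l) := by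
  simp [vgen, ygen, zgen]

theorem pow_four_nsmul_ygen : p ^ 4 • ygen p = 0 := by
  simp [ygen]

theorem pow_two_nsmul_zgen : p ^ 2 • zgen p = 0 := by
  simp [zgen]

theorem pow_four_nsmul_map_ygen (f : Bb p →+ Bb p) : p ^ 4 • f (ygen p) = 0 := by
  rw [← map_nsmul, pow_four_nsmul_ygen, map_zero]

theorem pow_two_nsmul_map_zgen (f : Bb p →+ Bb p) : p ^ 2 • f (zgen p) = 0 := by
  rw [← map_nsmul, pow_two_nsmul_zgen, map_zero]

variable [NeZero p]

theorem eq_nsmul_xgen_add (w : Bb p) :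
    w = w.1.val • xgen p + w.2.1.val • ygen p + w.2.2.val • zgen p := by
  simp [xgen, ygen, zgen]

variable {X Y Z : Bb p}

theorem modP_fst_eq_zero_of_pow_nsmul_eq_zero {k : ℕ} (hk : k < 6) (hY : p ^ k • Y = 0) :
    modP p 6 Y.1 = 0 :=
  modP_eq_zero_of_pow_mul_eq_zero hk (by simpa using congrArg Prod.fst hY)

theorem exists_modP_eq_of_mem_Asub (hY : p ^ 4 • Y = 0) (hZ : p ^ 2 • Z = 0) {l : ℕ}
    (h : p ^ 2 • X + p • Y + Z ∈ Asub p l) :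
    ∃ α : ZMod p, modP p 6 X.1 = α ∧ modP p 4 Y.2.1 = α ∧ modP p 2 Z.2.2 = α := by
  obtain ⟨α, β, hu⟩ := AddSubgroup.mem_closure_pair.mp h
  rw [ugen_eq, vgen_eq] at hu
  obtain ⟨E1, E2, E3⟩ : _ ∧ _ ∧ _ := by simpa [Prod.ext_iff] using hu
  have hY1 : (p : ZMod (p ^ 6)) ^ 4 * Y.1 = 0 := by simpa using congrArg Prod.fst hY
  obtain ⟨hZ1, hZ2, -⟩ : _ ∧ _ ∧ _ := by simpa [Prod.ext_iff] using hZ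
  refine ⟨α, ?_, ?_, ?_⟩
  · rw [← map_intCast (modP p 6)]
    refine modP_eq_of_pow_mul_sub_eq_zero (k := 5) (by norm_num) ?_
    linear_combination (-(p : ZMod (p ^ 6)) ^ 3) * E1 - hY1 - (p : ZMod (p ^ 6)) * hZ1
  · rw [← map_intCast (modP p 4)]
    refine modP_eq_of_pow_mul_sub_eq_zero (k := 3) (by norm_num) ?_
    linear_combination (-(p : ZMod (p ^ 4)) ^ 2) * E2
      + ((β : ZMod (p ^ 4)) - X.2.1) * ppow_zero p 4 4 le_rfl - hZ2
  · rw [← map_intCast (modP p 2)]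
    refine modP_eq_of_pow_mul_sub_eq_zero (k := 1) (by norm_num) ?_
    linear_combination (-(p : ZMod (p ^ 2))) * E3
      + ((β : ZMod (p ^ 2)) * l - Y.2.2 - p * X.2.2) * ppow_zero p 2 2 le_rfl

theorem natCast_mul_modP_eq_of_mem_Asub (hY : p ^ 4 • Y = 0) (hZ : p ^ 2 • Z = 0) {l l' : ℕ}
    (h : p ^ 2 • Y + (p * l) • Z ∈ Asub p l') :
    (l : ZMod p) * modP p 2 Z.2.2 = l' * modP p 4 Y.2.1 := by
  obtain ⟨γ, δ, hv⟩ := AddSubgroup.mem_closure_pair.mp h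
  rw [ugen_eq, vgen_eq] at hv
  obtain ⟨E4, E5, E6⟩ : _ ∧ _ ∧ _ := by simpa [Prod.ext_iff] using hv
  have hY1 : (p : ZMod (p ^ 6)) ^ 4 * Y.1 = 0 := by simpa using congrArg Prod.fst hY
  obtain ⟨hZ1, hZ2, -⟩ : _ ∧ _ ∧ _ := by simpa [Prod.ext_iff] using hZ
  obtain ⟨γ', rfl⟩ : (p : ℤ) ^ (6 - 4) ∣ γ := by
    refine pow_dvd_of_intCast_mul_pow_eq_zero (by norm_num) ?_
    push_cast
    linear_combination (p : ZMod (p ^ 6)) ^ 2 * E4 + hY1 + (p : ZMod (p ^ 6)) * l * hZ1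
  push_cast at E5 E6
  have hY2 : modP p 4 Y.2.1 = δ := by
    rw [← map_intCast (modP p 4)]
    refine modP_eq_of_pow_mul_sub_eq_zero (k := 3) (by norm_num) ?_
    linear_combination (-(p : ZMod (p ^ 4))) * E5 + (γ' : ZMod (p ^ 4)) * ppow_zero p 4 4 le_rfl
      - (l : ZMod (p ^ 4)) * hZ2
  have hZ3 : modP p 2 (l * Z.2.2) = modP p 2 (δ * l') := by
    refine modP_eq_of_pow_mul_sub_eq_zero (k := 1) (by norm_num) ?_
    linear_combination (-1 : ZMod (p ^ 2)) * E6
      + ((γ' : ZMod (p ^ 2)) - Y.2.2) * ppow_zero p 2 2 le_rfl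
  simpa [hY2, mul_comm] using hZ3

end Birkhoff

theorem modP_fst_map_xgen_ne_zero {p : ℕ} [Fact p.Prime] {f : Bb p →+ Bb p}
    (hf : Function.Surjective f) : modP p 6 (f (xgen p)).1 ≠ 0 := by
  intro hX
  have hY := modP_fst_eq_zero_of_pow_nsmul_eq_zero (by norm_num) (pow_four_nsmul_map_ygen f)
  have hZ := modP_fst_eq_zero_of_pow_nsmul_eq_zero (by norm_num) (pow_two_nsmul_map_zgen f)
  obtain ⟨w, hw⟩ := hf (xgen p)
  rw [eq_nsmul_xgen_add w, map_add, map_add, map_nsmul, map_nsmul, map_nsmul] at hw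
  have h := congrArg (fun b => modP p 6 b.1) hw
  simp only [Prod.fst_add, Prod.smul_fst, map_add, map_nsmul, hX, hY, hZ, smul_zero,
    add_zero] at h
  simp [xgen] at h

/-- For `λ ≠ λ'` in `{0,…,p-1}` there is no automorphism `f` of
`B = ℤ/p⁶ ⊕ ℤ/p⁴ ⊕ ℤ/p²` with `f(A_λ) = A_{λ'}`. -/
theorem birkhoff_embeddings_nonisomorphic (p : ℕ) [Fact p.Prime] (l l' : ℕ)
    (hl : l < p) (hl' : l' < p) (hne : l ≠ l') :
    ¬ ∃ f : Bb p ≃+ Bb p, (Asub p l).map f.toAddMonoidHom = Asub p l' := by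
  rintro ⟨f, hA⟩
  have hmem : ∀ a ∈ Asub p l, f.toAddMonoidHom a ∈ Asub p l' :=
    fun a ha => hA ▸ AddSubgroup.mem_map_of_mem _ ha
  have hY := pow_four_nsmul_map_ygen f.toAddMonoidHom
  have hZ := pow_two_nsmul_map_zgen f.toAddMonoidHom
  obtain ⟨α, hαX, hαY, hαZ⟩ := exists_modP_eq_of_mem_Asub (X := f.toAddMonoidHom (xgen p)) hY hZ
    (by simpa only [ugen, map_add, map_nsmul] using hmem _ (AddSubgroup.subset_closure (.inl rfl)))
  have hv := natCast_mul_modP_eq_of_mem_Asub hY hZ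
    (by simpa only [vgen, map_add, map_nsmul] using hmem _ (AddSubgroup.subset_closure (.inr rfl)))
  have hll' : (l : ZMod p) ≠ l' := by
    rwa [Ne, ZMod.natCast_eq_natCast_iff', Nat.mod_eq_of_lt hl, Nat.mod_eq_of_lt hl']
  have hα : α = 0 := by
    rw [hαY, hαZ] at hv
    exact (mul_eq_zero.mp (by linear_combination hv)).resolve_left (sub_ne_zero.mpr hll')
  exact modP_fst_map_xgen_ne_zero (f := f.toAddMonoidHom) f.surjective (hαX.trans hα)
end Metabelian
end

section
/- The group M_λ = G(A_λ ⊆ B) of order p^{22} has exponent p^6, its center has exponent p^6, and its commutator subgroup has exponent p^4. -/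
/-! In `M = A × B × ℤ/n` the powers are `(a, b, d) ^ k = (k a, k b + C(k, 2) d a, k d)`, so with
`n = p⁴` killing `A_λ`, `p⁶` killing `B` and `p⁴ ∣ C(p⁶, 2)` every element has order dividing `p⁶`.
Commutators are `⁅(a, b, d), (a', b', d')⁆ = (0, d a' - d' a, 0)`, so the commutator subgroup lies
in the central copy of `A_λ` and has exponent dividing `p⁴`. Both bounds are attained: `(0, x, 0)`
is central of order `p⁶`, and `(0, u, 0) = ⁅(0, 0, 1), (u, 0, 0)⁆` has order `p⁴`. Finally
`|A_λ| = p⁶`, since `⟨u⟩` (order `p⁴`) and `⟨v_λ⟩` (order `p²`) meet trivially, as the first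
coordinates show. -/

namespace Metabelian

variable {B : Type*} [AddCommGroup B]

theorem _root_.AddSubgroup.card_sup_of_disjoint {G : Type*} [AddCommGroup G] {H K : AddSubgroup G}
    (h : Disjoint H K) : Nat.card ↥(H ⊔ K) = Nat.card H * Nat.card K := by
  rw [← Nat.card_prod]
  refine (Nat.card_congr (Equiv.ofBijective
    (fun x => ⟨x.1 + x.2, AddSubgroup.add_mem_sup x.1.2 x.2.2⟩)
    ⟨fun x y hxy => AddSubgroup.add_injective_of_disjoint h (congrArg Subtype.val hxy), ?_⟩)).symm
  rintro ⟨g, hg⟩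
  obtain ⟨a, ha, b, hb, rfl⟩ := AddSubgroup.mem_sup.mp hg
  exact ⟨(⟨a, ha⟩, ⟨b, hb⟩), rfl⟩

theorem _root_.addOrderOf_eq_of_map_eq {G H : Type*} [AddMonoid G] [AddMonoid H] (f : G →+ H)
    {x : G} {n : ℕ} (hx : n • x = 0) (hfx : addOrderOf (f x) = n) : addOrderOf x = n :=
  Nat.dvd_antisymm (addOrderOf_dvd_of_nsmul_eq_zero hx) (hfx ▸ addOrderOf_map_dvd f x)

theorem _root_.Monoid.exponent_eq_of_dvd_of_orderOf_eq {G : Type*} [Monoid G] {m : ℕ}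
    (h : Monoid.exponent G ∣ m) {g : G} (hg : orderOf g = m) : Monoid.exponent G = m :=
  Nat.dvd_antisymm h (hg ▸ Monoid.order_dvd_exponent g)

theorem _root_.Nat.pow_dvd_choose_two_pow_succ (p k : ℕ) : p ^ k ∣ (p ^ (k + 1)).choose 2 := by
  rw [Nat.choose_two_right]
  rcases Nat.even_or_odd p with ⟨q, rfl⟩ | hodd
  · rw [show (q + q) ^ (k + 1) * ((q + q) ^ (k + 1) - 1)
        = (q + q) ^ k * (q * ((q + q) ^ (k + 1) - 1)) * 2 by ring, Nat.mul_div_cancel _ two_pos]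
    exact dvd_mul_right _ _
  · obtain ⟨r, hr⟩ := (Nat.Odd.sub_odd hodd.pow odd_one).two_dvd
    rw [hr, show p ^ (k + 1) * (2 * r) = p ^ (k + 1) * r * 2 by ring, Nat.mul_div_cancel _ two_pos]
    exact dvd_mul_of_dvd_left (pow_dvd_pow p k.le_succ) r

theorem _root_.ZMod.addOrderOf_natCast_pow {p : ℕ} (hp : p ≠ 0) {k m : ℕ} (hkm : k ≤ m) :
    addOrderOf ((p ^ k : ℕ) : ZMod (p ^ m)) = p ^ (m - k) := by
  rw [ZMod.addOrderOf_coe _ (pow_ne_zero m hp), Nat.gcd_eq_right (pow_dvd_pow p hkm),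
    Nat.pow_div hkm (Nat.pos_of_ne_zero hp)]

section Construction

variable (A : AddSubgroup B) (n : ℕ) [NeZero n] [BoundedSub A n]

theorem mul_def_s12 (g h : A × B × ZMod n) :
    g * h = (g.1 + h.1, g.2.1 + g.2.2.val • (h.1 : B) + h.2.1, g.2.2 + h.2.2) := rfl

theorem one_def : (1 : A × B × ZMod n) = (0, 0, 0) := rfl

theorem val_nsmul_smul (d : ZMod n) (a : A) (k : ℕ) :
    (k • d).val • (a : B) = (k * d.val) • (a : B) := by
  have hkd : k • d = ((k * d.val : ℕ) : ZMod n) := by simp [nsmul_eq_mul]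
  rw [hkd, ZMod.val_natCast, val_smul_eq _ (BoundedSub.bound a)]

theorem pow_def (g : A × B × ZMod n) (k : ℕ) :
    g ^ k = (k • g.1, k • g.2.1 + (k.choose 2 * g.2.2.val) • (g.1 : B), k • g.2.2) := by
  induction k with
  | zero => simp [one_def]
  | succ k ih =>
    have hchoose : (k + 1).choose 2 = k.choose 2 + k := by simp [Nat.choose_succ_succ', add_comm]
    rw [pow_succ, ih, mul_def_s12]
    dsimp only
    rw [val_nsmul_smul, hchoose]
    simp only [succ_nsmul, add_mul, add_nsmul]
    exact Prod.ext rfl (Prod.ext (by ac_rfl) rfl)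

theorem exponent_dvd {m : ℕ} (hB : ∀ b : B, m • b = 0) (hnm : n ∣ m) (hn : n ∣ m.choose 2) :
    Monoid.exponent (A × B × ZMod n) ∣ m := by
  refine Monoid.exponent_dvd_of_forall_pow_eq_one fun g => ?_
  obtain ⟨c, hc⟩ := hn
  have hA : m • g.1 = 0 := Subtype.ext (by simpa using hB g.1)
  rw [pow_def, one_def, hc, mul_assoc, mul_nsmul, BoundedSub.bound g.1, nsmul_eq_mul,
    (ZMod.natCast_eq_zero_iff m n).mpr hnm, hB, hA]
  simp

def inB : Multiplicative B →* A × B × ZMod n where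
  toFun b := (0, b.toAdd, 0)
  map_one' := rfl
  map_mul' b c := by simp [mul_def_s12]

theorem inB_injective : Function.Injective (inB A n) :=
  fun _ _ h => congrArg (fun g => g.2.1) h

theorem orderOf_inB (b : B) : orderOf (inB A n (.ofAdd b)) = addOrderOf b := by
  rw [orderOf_injective _ (inB_injective A n), orderOf_ofAdd_eq_addOrderOf]

theorem inB_mem_center (b : Multiplicative B) : inB A n b ∈ Subgroup.center (A × B × ZMod n) :=
  Subgroup.mem_center_iff.mpr fun g => by simp [inB, mul_def_s12, add_comm]

open scoped commutatorElement in
theorem commutatorElement_eq_s12 (g h : A × B × ZMod n) :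
    ⁅g, h⁆ = inB A n (.ofAdd (g.2.2.val • (h.1 : B) - h.2.2.val • (g.1 : B))) := by
  rw [commutatorElement_def, mul_inv_eq_iff_eq_mul, mul_inv_eq_iff_eq_mul, inB]
  simp only [MonoidHom.coe_mk, OneHom.coe_mk, mul_def_s12, zero_add, toAdd_ofAdd,
    ZMod.val_zero, zero_smul, add_zero]
  refine Prod.ext (add_comm _ _) (Prod.ext ?_ (add_comm _ _))
  dsimp only
  abel

open scoped commutatorElement in
theorem commutator_le_map_inB :
    commutator (A × B × ZMod n) ≤ (AddSubgroup.toSubgroup A).map (inB A n) := by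
  rw [commutator_def, Subgroup.commutator_le]
  intro g _ h _
  rw [commutatorElement_eq_s12]
  exact Subgroup.mem_map_of_mem _ ((Multiplicative.mem_toSubgroup _ _).mpr
    (sub_mem (AddSubgroup.nsmul_mem _ h.1.2 _) (AddSubgroup.nsmul_mem _ g.1.2 _)))

open scoped commutatorElement in
theorem inB_mem_commutator [Fact (1 < n)] {a : B} (ha : a ∈ A) :
    inB A n (.ofAdd a) ∈ commutator (A × B × ZMod n) := by
  have h : inB A n (.ofAdd a) = ⁅((0 : A), (0 : B), (1 : ZMod n)), (⟨a, ha⟩, (0 : B), 0)⁆ := by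
    simp [commutatorElement_eq_s12, ZMod.val_one]
  rw [h, commutator_def]
  exact Subgroup.commutator_mem_commutator (Subgroup.mem_top _) (Subgroup.mem_top _)

theorem exponent_commutator_dvd : Monoid.exponent (commutator (A × B × ZMod n)) ∣ n := by
  refine Monoid.exponent_dvd_of_forall_pow_eq_one fun ⟨g, hg⟩ => Subtype.ext ?_
  obtain ⟨b, hb, rfl⟩ := commutator_le_map_inB A n hg
  rw [Subgroup.coe_pow, ← map_pow, OneMemClass.coe_one, ← map_one (inB A n)]
  exact congrArg _ (congrArg Multiplicative.ofAdd (BoundedSub.bound (⟨b.toAdd, hb⟩ : A)))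

end Construction

section Example

variable (p : ℕ)

theorem nsmul_Bb_eq_zero (b : Bb p) : p ^ 6 • b = 0 := by
  refine Prod.ext ?_ (Prod.ext ?_ ?_) <;>
    simp [nsmul_eq_mul, ppow_zero]

theorem addOrderOf_xgen : addOrderOf (xgen p) = p ^ 6 :=
  addOrderOf_eq_of_map_eq (AddMonoidHom.fst _ _) (nsmul_Bb_eq_zero p _) (ZMod.addOrderOf_one _)

theorem ugen_fst : (ugen p).1 = ((p ^ 2 : ℕ) : ZMod (p ^ 6)) := by
  simp [ugen, xgen, ygen, zgen]

theorem vgen_fst (l : ℕ) : (vgen p l).1 = 0 := by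
  simp [vgen, ygen, zgen]

theorem vgen_snd_fst (l : ℕ) : (vgen p l).2.1 = ((p ^ 2 : ℕ) : ZMod (p ^ 4)) := by
  simp [vgen, ygen, zgen]

theorem nsmul_vgen (l : ℕ) : p ^ 2 • vgen p l = 0 := by
  refine Prod.ext ?_ (Prod.ext ?_ ?_) <;>
    simp [vgen, ygen, zgen, nsmul_eq_mul, ← pow_add, ← mul_assoc, ppow_zero]

theorem ugen_mem (l : ℕ) : ugen p ∈ Asub p l := AddSubgroup.subset_closure (Or.inl rfl)

theorem Asub_eq_sup (l : ℕ) :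
    Asub p l = AddSubgroup.zmultiples (ugen p) ⊔ AddSubgroup.zmultiples (vgen p l) := by
  rw [Asub, Set.insert_eq, AddSubgroup.closure_union, AddSubgroup.zmultiples_eq_closure,
    AddSubgroup.zmultiples_eq_closure]

variable [Fact p.Prime]

theorem addOrderOf_ugen_fst : addOrderOf (ugen p).1 = p ^ 4 := by
  rw [ugen_fst, ZMod.addOrderOf_natCast_pow (Fact.out : p.Prime).ne_zero (by norm_num)]

theorem addOrderOf_ugen : addOrderOf (ugen p) = p ^ 4 :=
  addOrderOf_eq_of_map_eq (AddMonoidHom.fst _ _)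
    (BoundedSub.bound (A := Asub p 0) ⟨ugen p, ugen_mem p 0⟩) (addOrderOf_ugen_fst p)

theorem addOrderOf_vgen (l : ℕ) : addOrderOf (vgen p l) = p ^ 2 :=
  addOrderOf_eq_of_map_eq ((AddMonoidHom.fst _ _).comp (AddMonoidHom.snd _ _)) (nsmul_vgen p l)
    (by
      show addOrderOf (vgen p l).2.1 = _
      rw [vgen_snd_fst, ZMod.addOrderOf_natCast_pow (Fact.out : p.Prime).ne_zero (by norm_num)])

theorem disjoint_zmultiples_ugen_vgen (l : ℕ) :
    Disjoint (AddSubgroup.zmultiples (ugen p)) (AddSubgroup.zmultiples (vgen p l)) := by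
  rw [AddSubgroup.disjoint_def]
  rintro _ ⟨i, rfl⟩ ⟨j, hij⟩
  have hfst : i • (ugen p).1 = 0 := by
    simpa [vgen_fst] using (congrArg Prod.fst hij).symm
  rw [← addOrderOf_dvd_iff_zsmul_eq_zero, addOrderOf_ugen_fst] at hfst
  rwa [← addOrderOf_dvd_iff_zsmul_eq_zero, addOrderOf_ugen]

theorem card_Asub (l : ℕ) : Nat.card (Asub p l) = p ^ 6 := by
  rw [Asub_eq_sup, AddSubgroup.card_sup_of_disjoint (disjoint_zmultiples_ugen_vgen p l),
    Nat.card_zmultiples, Nat.card_zmultiples, addOrderOf_ugen, addOrderOf_vgen, ← pow_add]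

end Example

theorem birkhoff_group_exponents_general (p : ℕ) [Fact p.Prime] (l : ℕ) :
    Nat.card (Asub p l × Bb p × ZMod (p ^ 4)) = p ^ 22 ∧
    Monoid.exponent (Asub p l × Bb p × ZMod (p ^ 4)) = p ^ 6 ∧
    Monoid.exponent (Subgroup.center (Asub p l × Bb p × ZMod (p ^ 4))) = p ^ 6 ∧
    Monoid.exponent (commutator (Asub p l × Bb p × ZMod (p ^ 4))) = p ^ 4 := by
  have : Fact (1 < p ^ 4) := ⟨Nat.one_lt_pow (by norm_num) (Fact.out : p.Prime).one_lt⟩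
  have hexp : Monoid.exponent (Asub p l × Bb p × ZMod (p ^ 4)) ∣ p ^ 6 :=
    exponent_dvd _ _ (nsmul_Bb_eq_zero p) (pow_dvd_pow p (by norm_num))
      ((pow_dvd_pow p (by norm_num)).trans (Nat.pow_dvd_choose_two_pow_succ p 5))
  have hx := orderOf_inB (Asub p l) (p ^ 4) (xgen p)
  rw [addOrderOf_xgen] at hx
  refine ⟨?_, Monoid.exponent_eq_of_dvd_of_orderOf_eq hexp hx, ?_, ?_⟩
  · simp only [Nat.card_prod, Nat.card_zmod, card_Asub]
    ring
  · refine Monoid.exponent_eq_of_dvd_of_orderOf_eq (g := ⟨_, inB_mem_center _ _ _⟩) ?_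
      ((Subgroup.orderOf_mk _ _).trans hx)
    rw [← Subgroup.exponent_toSubmonoid]
    exact (Monoid.exponent_submonoid_dvd _).trans hexp
  · refine Monoid.exponent_eq_of_dvd_of_orderOf_eq (exponent_commutator_dvd _ _)
      (g := ⟨_, inB_mem_commutator _ _ (ugen_mem p l)⟩) ?_
    rw [Subgroup.orderOf_mk, orderOf_inB, addOrderOf_ugen]

/-- The group `M_λ = G(A_λ ⊆ B)` of order `p²²` has exponent `p⁶`, its center has
exponent `p⁶`, and its commutator subgroup has exponent `p⁴`. -/
theorem birkhoff_group_exponents (p : ℕ) [Fact p.Prime] (l : ℕ) (hl : l < p) :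
    Nat.card (Asub p l × Bb p × ZMod (p ^ 4)) = p ^ 22 ∧
    Monoid.exponent (Asub p l × Bb p × ZMod (p ^ 4)) = p ^ 6 ∧
    Monoid.exponent (Subgroup.center (Asub p l × Bb p × ZMod (p ^ 4))) = p ^ 6 ∧
    Monoid.exponent (commutator (Asub p l × Bb p × ZMod (p ^ 4))) = p ^ 4 :=
  birkhoff_group_exponents_general p l
end Metabelian
end
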